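/- Let G be a loopless multigraph on n ≥ 2 vertices with maximum degree Δ ≥ 2. Then there exist a matching M₁ of G, a matching M₂ of G − M₁, and a matching M₃ of (G − M₁) − M₂ such that the multigraph ((G − M₁) − M₂) − M₃ has maximum degree at most Δ − 2. -/

import Mathlib

open scoped Classical

namespace NSBPaper

variable {V : Type} [Fintype V] [DecidableEq V]

/-- Degree of a vertex in a loopless multigraph given by multiplicity function `w`. -/
def deg (w : V → V → ℕ) (v : V) : ℕ := ∑ u, w v u

/-- Maximum degree of the multigraph. -/
def maxDeg (w : V → V → ℕ) : ℕ := Finset.univ.sup fun v => deg w v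

/-- The support simple graph of a multigraph: `u` and `v` are adjacent iff `u ≠ v`
and there is at least one multi-edge between them. -/
def support (w : V → V → ℕ) : SimpleGraph V where
  Adj u v := u ≠ v ∧ 1 ≤ w u v ∧ 1 ≤ w v u
  symm := ⟨fun u v h => ⟨h.1.symm, h.2.2, h.2.1⟩⟩
  loopless := ⟨fun v h => h.1 rfl⟩

/-- A set of unordered pairs `M` saturates a vertex `v` if some pair of `M` contains `v`. -/
def Saturates (M : Finset (Sym2 V)) (v : V) : Prop := ∃ e ∈ M, v ∈ e

/-- `M` is a matching of the multigraph `w`: its elements are non-loop edges of the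
support, and no two distinct elements share a vertex. -/
def IsMatching (w : V → V → ℕ) (M : Finset (Sym2 V)) : Prop :=
  (∀ e ∈ M, ¬ e.IsDiag) ∧
  (∀ u v : V, s(u, v) ∈ M → 1 ≤ w u v) ∧
  (∀ e ∈ M, ∀ f ∈ M, e ≠ f → ∀ x : V, x ∈ e → x ∉ f)

/-- `M` is a maximal matching of `w`: no pair can be added keeping it a matching. -/
def IsMaximalMatching (w : V → V → ℕ) (M : Finset (Sym2 V)) : Prop :=
  IsMatching w M ∧ ∀ e : Sym2 V, e ∉ M → ¬ IsMatching w (insert e M)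

/-- Removing a matching `M` from the multigraph `w`: the multiplicity of each pair in `M`
decreases by one. -/
def removeMatching (w : V → V → ℕ) (M : Finset (Sym2 V)) : V → V → ℕ :=
  fun u v => if s(u, v) ∈ M then w u v - 1 else w u v

/-- The subgraph of `G` induced by `Z` is bipartite: there is a set `A` such that every
edge of `G` inside `Z` joins `A` to its complement. -/
def BipartiteOn (G : SimpleGraph V) (Z : Set V) : Prop :=
  ∃ A : Set V, ∀ ⦃u v : V⦄, u ∈ Z → v ∈ Z → G.Adj u v → (u ∈ A ↔ v ∉ A)

/-- The edge multiset of `w` can be partitioned into `T` matchings. -/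
def CanEvacuate (w : V → V → ℕ) (T : ℕ) : Prop :=
  ∃ M : Fin T → Finset (Sym2 V),
    (∀ j, IsMatching w (M j)) ∧
    ∀ u v : V, (Finset.univ.filter fun j => s(u, v) ∈ M j).card = w u v

/-- The vertex-weight of a matching: the sum of the weights of its saturated vertices. -/
noncomputable def matchWeight (φ : V → ℕ) (M : Finset (Sym2 V)) : ℕ :=
  ∑ v : V, if Saturates M v then φ v else 0

/-- `Rfun M k i = 1` iff vertex `i` is saturated by the matching chosen in slot `k`. -/
noncomputable def Rfun (M : ℕ → Finset (Sym2 V)) (k : ℕ) (i : V) : ℕ :=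
  if Saturates (M k) i then 1 else 0

/-- `Ufun M k i` is `R i (k-1) * R i (k-2)` if `k ≡ 2 [MOD 3]` and `R i (k-1)` otherwise,
with `R i k = 0` for `k < 0`. -/
noncomputable def Ufun (M : ℕ → Finset (Sym2 V)) (k : ℕ) (i : V) : ℕ :=
  if k = 0 then 0
  else if k % 3 = 2 then Rfun M (k - 1) i * Rfun M (k - 2) i
  else Rfun M (k - 1) i

/-- Vertex `i` is heavy in `w`: `n * d(i) ≥ (n - 1) * Δ`. -/
def Heavy (w : V → V → ℕ) (i : V) : Prop :=
  (Fintype.card V - 1) * maxDeg w ≤ Fintype.card V * deg w i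

/-- Vertex `i` is critical in `w`: its degree is the maximum degree. -/
def Critical (w : V → V → ℕ) (i : V) : Prop := deg w i = maxDeg w

/-- The NSB weight of vertex `i`, where `u i` records whether `i` received enough
service previously. -/
noncomputable def nsbWeight (w : V → V → ℕ) (u : V → ℕ) (i : V) : ℕ :=
  if Heavy w i then deg w i * (2 - u i) else deg w i

/-- The LC-NSB weight of vertex `i`. -/
noncomputable def lcnsbWeight (w : V → V → ℕ) (u : V → ℕ) (i : V) : ℕ :=
  if Critical w i then 5 - 2 * u i
  else if Heavy w i then 4 - 2 * u i
  else 1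

/-- An NSB evacuation run on the initial multigraph `w0`: in each slot `k`, a matching
`M k` of `G k` maximizing the total NSB weight of saturated vertices is removed. -/
structure NSBRun (w0 : V → V → ℕ) where
  G : ℕ → V → V → ℕ
  M : ℕ → Finset (Sym2 V)
  init : G 0 = w0
  step : ∀ k, G (k + 1) = removeMatching (G k) (M k)
  matching : ∀ k, IsMatching (G k) (M k)
  opt : ∀ k, ∀ M' : Finset (Sym2 V), IsMatching (G k) M' →
    matchWeight (nsbWeight (G k) (Ufun M k)) M' ≤ matchWeight (nsbWeight (G k) (Ufun M k)) (M k)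

/-- An LC-NSB evacuation run on the initial multigraph `w0`. -/
structure LCNSBRun (w0 : V → V → ℕ) where
  G : ℕ → V → V → ℕ
  M : ℕ → Finset (Sym2 V)
  init : G 0 = w0
  step : ∀ k, G (k + 1) = removeMatching (G k) (M k)
  matching : ∀ k, IsMatching (G k) (M k)
  opt : ∀ k, ∀ M' : Finset (Sym2 V), IsMatching (G k) M' →
    matchWeight (lcnsbWeight (G k) (Ufun M k)) M' ≤
      matchWeight (lcnsbWeight (G k) (Ufun M k)) (M k)

end NSBPaper

/-!
Remove a maximal matching `M₁`. A vertex that still has degree `Δ` was not saturated by `M₁`, so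
by maximality these vertices are pairwise non-adjacent.

The key fact is that if the vertices of maximum degree `D ≥ 1` induce a bipartite subgraph, then
some matching saturates all of them. Double counting gives Hall's condition, hence an injective
choice of a neighbour `f v` for every such vertex `v`. Along `f` the two sides alternate, so the
functional graph of `f` consists of paths and even cycles; peeling paths from their start and
splitting cycles by side yields a set `T` with `f(T)` disjoint from `T` and covering the remaining
vertices, and `{v, f v}` for `v ∈ T` is the matching.

Applied to `G - M₁` and extended to a maximal matching `M₂`, this lowers the maximum degree to
`Δ - 1`. In `G - M₁ - M₂` a vertex of degree `Δ - 1` either had degree `Δ` in `G - M₁` or was not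
saturated by `M₂`; both classes are independent, so the key fact applies once more and yields `M₃`.
-/

open Finset

namespace NSBPaper

section Matching

variable {V : Type} {w : V → V → ℕ} {M : Finset (Sym2 V)}

lemma saturates_iff_exists_mem {v : V} : Saturates M v ↔ ∃ u, s(v, u) ∈ M := by
  constructor
  · rintro ⟨e, he, hv⟩
    obtain ⟨u, rfl⟩ := Sym2.mem_iff_exists.mp hv
    exact ⟨u, he⟩
  · rintro ⟨u, hu⟩
    exact ⟨_, hu, Sym2.mem_mk_left v u⟩

lemma IsMatching.eq_of_mem (hM : IsMatching w M) {v u u' : V} (h : s(v, u) ∈ M)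
    (h' : s(v, u') ∈ M) : u = u' := by
  by_contra hne
  exact hM.2.2 _ h _ h' (fun h => hne (Sym2.congr_right.mp h)) v
    (Sym2.mem_mk_left v u) (Sym2.mem_mk_left v u')

lemma isMatching_empty (w : V → V → ℕ) : IsMatching w ∅ :=
  ⟨by simp, by simp, by simp⟩

variable [DecidableEq V]

lemma removeMatching_le (w : V → V → ℕ) (M : Finset (Sym2 V)) (u v : V) :
    removeMatching w M u v ≤ w u v := by
  unfold removeMatching; split <;> omega

lemma removeMatching_comm (hs : ∀ u v, w u v = w v u) (M : Finset (Sym2 V)) (u v : V) :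
    removeMatching w M u v = removeMatching w M v u := by
  simp only [removeMatching, Sym2.eq_swap, hs u v]

lemma removeMatching_self (hl : ∀ v, w v v = 0) (M : Finset (Sym2 V)) (v : V) :
    removeMatching w M v v = 0 := by
  simp [removeMatching, hl v]

lemma IsMatching.insert (hs : ∀ u v, w u v = w v u) (hM : IsMatching w M) {u v : V}
    (huv : u ≠ v) (h1 : 1 ≤ w u v) (hu : ¬ Saturates M u) (hv : ¬ Saturates M v) :
    IsMatching w (insert s(u, v) M) := by
  have hnew : ∀ f ∈ M, ∀ x ∈ s(u, v), x ∉ f := by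
    intro f hf x hx hxf
    rcases Sym2.mem_iff.mp hx with rfl | rfl
    exacts [hu ⟨f, hf, hxf⟩, hv ⟨f, hf, hxf⟩]
  refine ⟨?_, ?_, ?_⟩
  · simpa [Sym2.mk_isDiag_iff] using ⟨huv, hM.1⟩
  · intro a b hab
    rcases mem_insert.mp hab with heq | hab
    · rcases Sym2.eq_iff.mp heq with ⟨rfl, rfl⟩ | ⟨rfl, rfl⟩
      exacts [h1, hs a b ▸ h1]
    · exact hM.2.1 a b hab
  · intro e he f hf hef x hxe hxf
    rcases mem_insert.mp he with rfl | he <;> rcases mem_insert.mp hf with rfl | hf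
    · exact hef rfl
    · exact hnew f hf x hxe hxf
    · exact hnew e he x hxf hxe
    · exact hM.2.2 e he f hf hef x hxe hxf

lemma isMatching_image (hs : ∀ u v, w u v = w v u) {T : Finset V} {f : V → V}
    (hinj : Set.InjOn f T) (hw : ∀ v ∈ T, 1 ≤ w v (f v)) (hT : ∀ v ∈ T, f v ∉ T) :
    IsMatching w (T.image fun v => s(v, f v)) := by
  refine ⟨?_, ?_, ?_⟩
  · simp only [mem_image, forall_exists_index, and_imp]
    rintro _ v hv rfl
    rw [Sym2.mk_isDiag_iff]
    exact fun h => hT v hv (h ▸ hv)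
  · intro a b hab
    obtain ⟨v, hv, heq⟩ := mem_image.mp hab
    rcases Sym2.eq_iff.mp heq with ⟨rfl, rfl⟩ | ⟨rfl, rfl⟩
    · exact hw v hv
    · rw [hs]; exact hw v hv
  · intro e he e' he' hee' x hxe hxe'
    obtain ⟨a, ha, rfl⟩ := mem_image.mp he
    obtain ⟨b, hb, rfl⟩ := mem_image.mp he'
    have hab : a ≠ b := by rintro rfl; exact hee' rfl
    rcases Sym2.mem_iff.mp hxe with rfl | rfl <;> rcases Sym2.mem_iff.mp hxe' with h | h
    · exact hab h
    · exact hT b hb (h ▸ ha)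
    · exact hT a ha (h ▸ hb)
    · exact hab (hinj ha hb h)

lemma exists_isMaximalMatching_superset [Fintype V] {C : Finset (Sym2 V)}
    (hC : IsMatching w C) :
    ∃ M, IsMaximalMatching w M ∧ C ⊆ M := by
  obtain ⟨M, hCM, hM, hmax⟩ := Finite.exists_le_maximal (p := IsMatching w) hC
  exact ⟨M, ⟨hM, fun e he hins => he (hmax hins (subset_insert e M) (mem_insert_self e M))⟩, hCM⟩

lemma IsMaximalMatching.eq_zero_of_not_saturates (hs : ∀ u v, w u v = w v u)
    (hM : IsMaximalMatching w M) {u v : V} (huv : u ≠ v) (hu : ¬ Saturates M u)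
    (hv : ¬ Saturates M v) : w u v = 0 := by
  by_contra h
  exact hM.2 s(u, v) (fun he => hu ⟨_, he, Sym2.mem_mk_left u v⟩)
    (hM.1.insert hs huv (Nat.one_le_iff_ne_zero.mpr h) hu hv)

end Matching

section Degree

variable {V : Type} [Fintype V] {w : V → V → ℕ} {M : Finset (Sym2 V)} {D : ℕ}

lemma deg_le_maxDeg (w : V → V → ℕ) (v : V) : deg w v ≤ maxDeg w :=
  le_sup (mem_univ v)

lemma maxDeg_le_iff : maxDeg w ≤ D ↔ ∀ v, deg w v ≤ D := by
  simp [maxDeg]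

lemma card_le_card_neighbors (hs : ∀ u v, w u v = w v u) (hD : 1 ≤ D)
    (hmax : ∀ v, deg w v ≤ D) {s : Finset V} (hsD : ∀ v ∈ s, deg w v = D) :
    #s ≤ #{u | ∃ v ∈ s, 1 ≤ w v u} := by
  set N : Finset V := {u | ∃ v ∈ s, 1 ≤ w v u}
  have hrow : ∀ v ∈ s, deg w v = ∑ u ∈ N, w v u := fun v hv =>
    (sum_subset (subset_univ N) fun u _ hu => by
      by_contra h
      exact hu (mem_filter.mpr ⟨mem_univ u, v, hv, Nat.one_le_iff_ne_zero.mpr h⟩)).symm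
  have hcol : ∀ u, ∑ v ∈ s, w v u ≤ D := fun u => calc
    ∑ v ∈ s, w v u ≤ ∑ v, w v u := sum_le_sum_of_subset (subset_univ s)
    _ = deg w u := sum_congr rfl fun v _ => hs v u
    _ ≤ D := hmax u
  refine Nat.le_of_mul_le_mul_left ?_ hD
  calc D * #s = ∑ v ∈ s, deg w v := by rw [sum_congr rfl hsD, sum_const, smul_eq_mul, mul_comm]
    _ = ∑ v ∈ s, ∑ u ∈ N, w v u := sum_congr rfl hrow
    _ = ∑ u ∈ N, ∑ v ∈ s, w v u := sum_comm
    _ ≤ ∑ _u ∈ N, D := sum_le_sum fun u _ => hcol u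
    _ = D * #N := by rw [sum_const, smul_eq_mul, mul_comm]

lemma exists_injOn_neighbor_of_deg_eq (hs : ∀ u v, w u v = w v u) (hD : 1 ≤ D)
    (hmax : ∀ v, deg w v ≤ D) {S : Finset V} (hS : ∀ v ∈ S, deg w v = D) :
    ∃ f : V → V, Set.InjOn f S ∧ ∀ v ∈ S, 1 ≤ w v (f v) := by
  obtain ⟨f, hinj, hf⟩ := (Fintype.all_card_le_filter_rel_iff_exists_injective
    fun (a : S) b => 1 ≤ w a b).mp fun A => by
      simpa using card_le_card_neighbors hs hD hmax (s := A.map (Function.Embedding.subtype _))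
        (by simpa using fun v hv _ => hS v hv)
  refine ⟨fun v => if h : v ∈ S then f ⟨v, h⟩ else v, fun a ha b hb hab => ?_, fun v hv => ?_⟩
  · rw [mem_coe] at ha hb
    simp only [dif_pos ha, dif_pos hb] at hab
    exact congrArg Subtype.val (hinj hab)
  · simpa [hv] using hf ⟨v, hv⟩

variable [DecidableEq V]

lemma deg_removeMatching_add (hM : IsMatching w M) (v : V) :
    deg (removeMatching w M) v + (if Saturates M v then 1 else 0) = deg w v := by
  have hterm : ∀ u, removeMatching w M v u + (if s(v, u) ∈ M then 1 else 0) = w v u := by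
    intro u
    unfold removeMatching
    split_ifs with h
    · have := hM.2.1 v u h; omega
    · rfl
  have hcount : ∑ u, (if s(v, u) ∈ M then 1 else 0) = if Saturates M v then 1 else 0 := by
    split_ifs with hsat
    · obtain ⟨u₀, hu₀⟩ := saturates_iff_exists_mem.mp hsat
      rw [sum_eq_single u₀ (fun u _ hu => if_neg fun h => hu (hM.eq_of_mem h hu₀)) (by simp),
        if_pos hu₀]
    · exact sum_eq_zero fun u _ => if_neg fun h => hsat (saturates_iff_exists_mem.mpr ⟨u, h⟩)
  simp only [deg, ← hcount, ← sum_add_distrib, hterm]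

lemma deg_removeMatching_le (hM : IsMatching w M) (v : V) :
    deg (removeMatching w M) v ≤ deg w v := by
  have := deg_removeMatching_add hM v; omega

lemma not_saturates_of_deg_le_deg_removeMatching (hM : IsMatching w M) {v : V}
    (h : deg w v ≤ deg (removeMatching w M) v) : ¬ Saturates M v := by
  intro hsat
  have := deg_removeMatching_add hM v
  rw [if_pos hsat] at this
  omega

lemma deg_removeMatching_le_pred (hM : IsMatching w M) (hmax : ∀ v, deg w v ≤ D)
    (hsat : ∀ v, deg w v = D → Saturates M v) (v : V) :
    deg (removeMatching w M) v ≤ D - 1 := by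
  have h := deg_removeMatching_add hM v
  have := hmax v
  by_cases hv : deg w v = D
  · rw [if_pos (hsat v hv)] at h; omega
  · split_ifs at h <;> omega

lemma IsMaximalMatching.removeMatching_eq_zero_of_deg_eq_maxDeg (hs : ∀ u v, w u v = w v u)
    (hl : ∀ v, w v v = 0) (hM : IsMaximalMatching w M) {u v : V}
    (hu : deg (removeMatching w M) u = maxDeg w) (hv : deg (removeMatching w M) v = maxDeg w) :
    removeMatching w M u v = 0 := by
  have hunsat : ∀ x, deg (removeMatching w M) x = maxDeg w → ¬ Saturates M x := fun x hx =>
    not_saturates_of_deg_le_deg_removeMatching hM.1 (hx ▸ deg_le_maxDeg w x)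
  rcases eq_or_ne u v with rfl | huv
  · exact removeMatching_self hl M u
  · exact Nat.eq_zero_of_le_zero <| (removeMatching_le w M u v).trans
      (hM.eq_zero_of_not_saturates hs huv (hunsat u hu) (hunsat v hv)).le

end Degree

section Alternating

variable {V : Type} {f : V → V} {A : Set V}

lemma exists_subset_covering_of_alternating_of_surjOn {S : Finset V}
    (hf : ∀ v ∈ S, ∃ u ∈ S, f u = v)
    (halt : ∀ v ∈ S, f v ∈ S → (v ∈ A ↔ f v ∉ A)) :
    ∃ T ⊆ S, (∀ v ∈ T, f v ∉ T) ∧ ∀ v ∈ S, v ∈ T ∨ ∃ u ∈ T, f u = v := by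
  refine ⟨{v ∈ S | v ∈ A}, filter_subset _ _, fun v hv hfv => ?_, fun v hv => ?_⟩
  · rw [mem_filter] at hv hfv
    exact (halt v hv.1 hfv.1).mp hv.2 hfv.2
  · by_cases hvA : v ∈ A
    · exact Or.inl (mem_filter.mpr ⟨hv, hvA⟩)
    · obtain ⟨u, hu, rfl⟩ := hf v hv
      exact Or.inr ⟨u, mem_filter.mpr ⟨hu, (halt u hu hv).mpr hvA⟩, rfl⟩

variable [DecidableEq V]

lemma exists_subset_covering_of_alternating (S : Finset V)
    (halt : ∀ v ∈ S, f v ∈ S → (v ∈ A ↔ f v ∉ A)) :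
    ∃ T ⊆ S, (∀ v ∈ T, f v ∉ T) ∧ ∀ v ∈ S, v ∈ T ∨ ∃ u ∈ T, f u = v := by
  induction S using Finset.strongInduction with
  | H S ih =>
  by_cases hstart : ∃ v₀ ∈ S, ∀ u ∈ S, f u ≠ v₀
  swap
  · push Not at hstart
    exact exists_subset_covering_of_alternating_of_surjOn hstart halt
  obtain ⟨v₀, hv₀, hstart⟩ := hstart
  set S' := S \ {v₀, f v₀}
  have hS' : S' ⊂ S := (ssubset_iff_of_subset sdiff_subset).mpr ⟨v₀, hv₀, by simp⟩
  obtain ⟨T, hTS, hT, hcover⟩ :=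
    ih S' hS' fun v hv hfv => halt v (hS'.subset hv) (hS'.subset hfv)
  have hv₀T : v₀ ∉ T := fun h => by simpa [S'] using hTS h
  have hfv₀T : f v₀ ∉ T := fun h => by simpa [S'] using hTS h
  refine ⟨insert v₀ T, insert_subset hv₀ (hTS.trans hS'.subset), ?_, fun v hv => ?_⟩
  · simp only [mem_insert, forall_eq_or_imp, not_or]
    exact ⟨⟨hstart v₀ hv₀, hfv₀T⟩, fun v hv => ⟨hstart v (hS'.subset (hTS hv)), hT v hv⟩⟩
  · by_cases h : v ∈ S'
    · rcases hcover v h with h | ⟨u, hu, rfl⟩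
      · exact Or.inl (mem_insert_of_mem h)
      · exact Or.inr ⟨u, mem_insert_of_mem hu, rfl⟩
    · obtain rfl | rfl : v = v₀ ∨ v = f v₀ := by simpa [S', hv, or_iff_not_imp_left] using h
      · exact Or.inl (mem_insert_self _ _)
      · exact Or.inr ⟨v₀, mem_insert_self _ _, rfl⟩

end Alternating

section Bipartite

variable {V : Type} {w : V → V → ℕ} {M : Finset (Sym2 V)}

lemma bipartiteOn_support_of_forall_eq_zero {Z : Set V}
    (hZ : ∀ ⦃u v⦄, u ∈ Z → v ∈ Z → w u v = 0) : BipartiteOn (support w) Z :=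
  ⟨∅, fun _ _ hu hv huv => absurd (hZ hu hv) (Nat.one_le_iff_ne_zero.mp huv.2.1)⟩

variable [DecidableEq V]

lemma IsMaximalMatching.bipartiteOn_support_removeMatching (hs : ∀ u v, w u v = w v u)
    (hM : IsMaximalMatching w M) {X Z : Set V} (hX : ∀ ⦃u v⦄, u ∈ X → v ∈ X → w u v = 0)
    (hZ : ∀ v ∈ Z, v ∉ X → ¬ Saturates M v) :
    BipartiteOn (support (removeMatching w M)) Z := by
  refine ⟨X, fun u v hu hv huv => ?_⟩
  have hw : w u v ≠ 0 :=
    Nat.one_le_iff_ne_zero.mp (huv.2.1.trans (removeMatching_le w M u v))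
  by_cases huX : u ∈ X <;> by_cases hvX : v ∈ X
  · exact absurd (hX huX hvX) hw
  · simp [huX, hvX]
  · simp [huX, hvX]
  · exact absurd (hM.eq_zero_of_not_saturates hs huv.1 (hZ u hu huX) (hZ v hv hvX)) hw

variable [Fintype V]

lemma exists_matching_saturating_of_bipartiteOn (hs : ∀ u v, w u v = w v u)
    (hl : ∀ v, w v v = 0) {D : ℕ} (hD : 1 ≤ D) (hmax : ∀ v, deg w v ≤ D)
    (hbip : BipartiteOn (support w) {v | deg w v = D}) :
    ∃ M, IsMatching w M ∧ ∀ v, deg w v = D → Saturates M v := by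
  obtain ⟨f, hinj, hf⟩ := exists_injOn_neighbor_of_deg_eq hs hD hmax (S := {v | deg w v = D})
    fun v hv => (mem_filter.mp hv).2
  obtain ⟨A, hA⟩ := hbip
  have hadj : ∀ v, deg w v = D → (support w).Adj v (f v) := by
    intro v hv
    have h1 := hf v (by simpa using hv)
    refine ⟨fun h => ?_, h1, hs v (f v) ▸ h1⟩
    rw [← h, hl] at h1
    omega
  obtain ⟨T, hTS, hT, hcover⟩ :=
    exists_subset_covering_of_alternating (f := f) (A := A) {v | deg w v = D} fun v hv hfv =>
      hA (by simpa using hv) (by simpa using hfv) (hadj v (by simpa using hv))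
  refine ⟨T.image fun v => s(v, f v),
    isMatching_image hs (hinj.mono (coe_subset.mpr hTS)) (fun v hv => hf v (hTS hv)) hT,
    fun v hv => ?_⟩
  rcases hcover v (by simpa using hv) with hvT | ⟨u, hu, rfl⟩
  · exact ⟨_, mem_image_of_mem _ hvT, Sym2.mem_mk_left _ _⟩
  · exact ⟨_, mem_image_of_mem _ hu, Sym2.mem_mk_right _ _⟩

lemma exists_isMaximalMatching_deg_removeMatching_le_pred (hs : ∀ u v, w u v = w v u)
    (hl : ∀ v, w v v = 0) {D : ℕ} (hD : 1 ≤ D) (hmax : ∀ v, deg w v ≤ D)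
    (hbip : BipartiteOn (support w) {v | deg w v = D}) :
    ∃ M, IsMaximalMatching w M ∧ ∀ v, deg (removeMatching w M) v ≤ D - 1 := by
  obtain ⟨C, hC, hsat⟩ := exists_matching_saturating_of_bipartiteOn hs hl hD hmax hbip
  obtain ⟨M, hM, hCM⟩ := exists_isMaximalMatching_superset hC
  refine ⟨M, hM, deg_removeMatching_le_pred hM.1 hmax fun v hv => ?_⟩
  obtain ⟨e, he, hve⟩ := hsat v hv
  exact ⟨e, hCM he, hve⟩

end Bipartite

theorem three_matchings_decrease_maxdeg_general {V : Type} [Fintype V] [DecidableEq V]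
    (w : V → V → ℕ) (hsymm : ∀ u v, w u v = w v u) (hloop : ∀ v, w v v = 0)
    (hΔ : 2 ≤ maxDeg w) :
    ∃ M₁ M₂ M₃ : Finset (Sym2 V),
      IsMatching w M₁ ∧
      IsMatching (removeMatching w M₁) M₂ ∧
      IsMatching (removeMatching (removeMatching w M₁) M₂) M₃ ∧
      maxDeg (removeMatching (removeMatching (removeMatching w M₁) M₂) M₃) ≤
        maxDeg w - 2 := by
  set Δ := maxDeg w
  obtain ⟨M₁, hM₁, -⟩ := exists_isMaximalMatching_superset (isMatching_empty w)
  set w₁ := removeMatching w M₁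
  have hdeg₁ : ∀ v, deg w₁ v ≤ Δ := fun v =>
    (deg_removeMatching_le hM₁.1 v).trans (deg_le_maxDeg w v)
  have htop₁ : ∀ ⦃u v⦄, deg w₁ u = Δ → deg w₁ v = Δ → w₁ u v = 0 := fun _ _ =>
    hM₁.removeMatching_eq_zero_of_deg_eq_maxDeg hsymm hloop
  have hsymm₁ := removeMatching_comm hsymm M₁
  obtain ⟨M₂, hM₂, hdeg₂⟩ := exists_isMaximalMatching_deg_removeMatching_le_pred hsymm₁
    (removeMatching_self hloop M₁) (by omega) hdeg₁ (bipartiteOn_support_of_forall_eq_zero htop₁)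
  set w₂ := removeMatching w₁ M₂
  have hunsat₂ : ∀ v, deg w₂ v = Δ - 1 → deg w₁ v ≠ Δ → ¬ Saturates M₂ v := fun v hv hv₁ =>
    not_saturates_of_deg_le_deg_removeMatching hM₂.1
      (show deg w₁ v ≤ deg w₂ v by have := hdeg₁ v; omega)
  have hbip₂ : BipartiteOn (support w₂) {v | deg w₂ v = Δ - 1} :=
    hM₂.bipartiteOn_support_removeMatching hsymm₁ htop₁ hunsat₂
  obtain ⟨M₃, hM₃, hdeg₃⟩ := exists_isMaximalMatching_deg_removeMatching_le_pred
    (removeMatching_comm hsymm₁ M₂) (removeMatching_self (removeMatching_self hloop M₁) M₂)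
    (by omega) hdeg₂ hbip₂
  exact ⟨M₁, M₂, M₃, hM₁.1, hM₂.1, hM₃.1, maxDeg_le_iff.mpr fun v => (hdeg₃ v).trans (by omega)⟩

/-- If `Δ ≥ 2`, there are three successive matchings whose removal
decreases the maximum degree by at least two. -/
theorem three_matchings_decrease_maxdeg {V : Type} [Fintype V] [DecidableEq V]
    (w : V → V → ℕ) (hsymm : ∀ u v, w u v = w v u) (hloop : ∀ v, w v v = 0)
    (hn : 2 ≤ Fintype.card V) (hΔ : 2 ≤ maxDeg w) :
    ∃ M₁ M₂ M₃ : Finset (Sym2 V),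
      IsMatching w M₁ ∧
      IsMatching (removeMatching w M₁) M₂ ∧
      IsMatching (removeMatching (removeMatching w M₁) M₂) M₃ ∧
      maxDeg (removeMatching (removeMatching (removeMatching w M₁) M₂) M₃) ≤
        maxDeg w - 2 :=
  three_matchings_decrease_maxdeg_general w hsymm hloop hΔ

end NSBPaper
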